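/- arXiv:1810.12127 — 2 statements merged into one kernel-verified Lean document; each statement's English description precedes it below -/
import Mathlib

section
/- Fix k > 0. On ℝ² with canonical coordinates (s, p_s) satisfying {s, p_s} = 1, define K₀ = k + (s² + p_s²)/2, K₁ = (s/2)·√(4k + s² + p_s²), K₂ = (p_s/2)·√(4k + s² + p_s²). Then these functions satisfy the su(1,1) relations {K₀, K₁} = -K₂, {K₁, K₂} = K₀, {K₀, K₂} = K₁. -/
/-- Partial derivative in the first variable. -/
noncomputable def pds (F : ℝ → ℝ → ℝ) (s p : ℝ) : ℝ := deriv (fun x => F x p) s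

/-- Partial derivative in the second variable. -/
noncomputable def pdp (F : ℝ → ℝ → ℝ) (s p : ℝ) : ℝ := deriv (fun y => F s y) p

/-- Canonical Poisson bracket on ℝ² with coordinates `(s, p_s)`:
`{F,G} = ∂F/∂s ∂G/∂p_s - ∂F/∂p_s ∂G/∂s`. -/
noncomputable def pb (F G : ℝ → ℝ → ℝ) (s p : ℝ) : ℝ :=
  pds F s p * pdp G s p - pdp F s p * pds G s p

/-!
With `ρ = √(4k + s² + p²)` one finds
`∂K₁/∂s = (4k + 2s² + p²)/(2ρ)`, `∂K₁/∂p = ∂K₂/∂s = sp/(2ρ)`, `∂K₂/∂p = (4k + s² + 2p²)/(2ρ)`,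
and each bracket reduces to the claimed function using only `ρ² = 4k + s² + p²`.
-/

section PartialDerivatives

variable {c : ℝ} (s p : ℝ)

theorem pds_const_add_half_sq_add_sq (a : ℝ) :
    pds (fun s p => a + (s ^ 2 + p ^ 2) / 2) s p = s := by
  simp [pds]

theorem pdp_const_add_half_sq_add_sq (a : ℝ) :
    pdp (fun s p => a + (s ^ 2 + p ^ 2) / 2) s p = p := by
  simp [pdp]

theorem hasDerivAt_sqrt_const_add_sq_add_sq_fst (hc : 0 < c) :
    HasDerivAt (fun x => √(c + x ^ 2 + p ^ 2)) (s / √(c + s ^ 2 + p ^ 2)) s := by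
  have hR : c + s ^ 2 + p ^ 2 ≠ 0 := by positivity
  convert (((hasDerivAt_pow 2 s).const_add c).add_const (p ^ 2)).sqrt hR using 1
  field_simp
  ring

theorem hasDerivAt_sqrt_const_add_sq_add_sq_snd (hc : 0 < c) :
    HasDerivAt (fun y => √(c + s ^ 2 + y ^ 2)) (p / √(c + s ^ 2 + p ^ 2)) p := by
  have hR : c + s ^ 2 + p ^ 2 ≠ 0 := by positivity
  convert ((hasDerivAt_pow 2 p).const_add (c + s ^ 2)).sqrt hR using 1
  field_simp
  ring

theorem pds_fst_mul_sqrt (hc : 0 < c) :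
    pds (fun s p => s / 2 * √(c + s ^ 2 + p ^ 2)) s p
      = (c + 2 * s ^ 2 + p ^ 2) / (2 * √(c + s ^ 2 + p ^ 2)) := by
  have hρ : 0 < √(c + s ^ 2 + p ^ 2) := by positivity
  have hρ2 : √(c + s ^ 2 + p ^ 2) ^ 2 = c + s ^ 2 + p ^ 2 := Real.sq_sqrt (by positivity)
  rw [pds, (((hasDerivAt_id' s).div_const 2).fun_mul
    (hasDerivAt_sqrt_const_add_sq_add_sq_fst s p hc)).deriv]
  field_simp
  linear_combination hρ2

theorem pdp_fst_mul_sqrt (hc : 0 < c) :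
    pdp (fun s p => s / 2 * √(c + s ^ 2 + p ^ 2)) s p
      = s * p / (2 * √(c + s ^ 2 + p ^ 2)) := by
  rw [pdp, ((hasDerivAt_sqrt_const_add_sq_add_sq_snd s p hc).const_mul (s / 2)).deriv]
  ring

theorem pds_snd_mul_sqrt (hc : 0 < c) :
    pds (fun s p => p / 2 * √(c + s ^ 2 + p ^ 2)) s p
      = s * p / (2 * √(c + s ^ 2 + p ^ 2)) := by
  rw [pds, ((hasDerivAt_sqrt_const_add_sq_add_sq_fst s p hc).const_mul (p / 2)).deriv]
  ring

theorem pdp_snd_mul_sqrt (hc : 0 < c) :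
    pdp (fun s p => p / 2 * √(c + s ^ 2 + p ^ 2)) s p
      = (c + s ^ 2 + 2 * p ^ 2) / (2 * √(c + s ^ 2 + p ^ 2)) := by
  have hρ : 0 < √(c + s ^ 2 + p ^ 2) := by positivity
  have hρ2 : √(c + s ^ 2 + p ^ 2) ^ 2 = c + s ^ 2 + p ^ 2 := Real.sq_sqrt (by positivity)
  rw [pdp, (((hasDerivAt_id' p).div_const 2).fun_mul
    (hasDerivAt_sqrt_const_add_sq_add_sq_snd s p hc)).deriv]
  field_simp
  linear_combination hρ2

end PartialDerivatives

/-- The canonical realization of su(1,1):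
`K₀ = k + (s² + p_s²)/2`, `K₁ = (s/2)√(4k + s² + p_s²)`, `K₂ = (p_s/2)√(4k + s² + p_s²)`
satisfy `{K₀,K₁} = -K₂`, `{K₁,K₂} = K₀`, `{K₀,K₂} = K₁`. -/
theorem su11_canonical_realization (k : ℝ) (hk : 0 < k) :
    let K0 : ℝ → ℝ → ℝ := fun s p => k + (s ^ 2 + p ^ 2) / 2
    let K1 : ℝ → ℝ → ℝ := fun s p => (s / 2) * Real.sqrt (4 * k + s ^ 2 + p ^ 2)
    let K2 : ℝ → ℝ → ℝ := fun s p => (p / 2) * Real.sqrt (4 * k + s ^ 2 + p ^ 2)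
    ∀ s p : ℝ,
      pb K0 K1 s p = -K2 s p ∧ pb K1 K2 s p = K0 s p ∧ pb K0 K2 s p = K1 s p := by
  intro K0 K1 K2 s p
  have h4k : 0 < 4 * k := by positivity
  simp only [pb, K0, K1, K2, pds_const_add_half_sq_add_sq, pdp_const_add_half_sq_add_sq,
    pds_fst_mul_sqrt s p h4k, pdp_fst_mul_sqrt s p h4k, pds_snd_mul_sqrt s p h4k,
    pdp_snd_mul_sqrt s p h4k]
  have hρ : 0 < √(4 * k + s ^ 2 + p ^ 2) := by positivity
  have hρ2 : √(4 * k + s ^ 2 + p ^ 2) ^ 2 = 4 * k + s ^ 2 + p ^ 2 := Real.sq_sqrt (by positivity)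
  refine ⟨?_, ?_, ?_⟩ <;> field_simp <;> rw [hρ2] <;> ring
end

section
/- In the Lie algebra of second-order moments for N degrees of freedom, the adjoint action of any generator Δ(q_i q_j) is nilpotent: applying ad(Δ(q_i q_j)) three times to any element yields zero. -/
/-!
Write `G = Δ(q_i q_j)` and `τ` for the symplectic form. The bracket with `G` is
`V ↦ (Gτ) V - V (τG)`, the difference of a left and a right multiplication, which commute.
Since `G` is supported on the position block and `τ` vanishes there, `GτG = 0`; hence
`(Gτ)² = 0` and `(τG)² = 0`, and the binomial expansion of the cube of a difference of two
commuting square-zero operators vanishes term by term.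
-/

open Matrix

/-- The canonical symplectic matrix `τ = ((0, I_N), (-I_N, 0))`; indices `Sum.inl i`
are positions `q_i`, indices `Sum.inr i` are momenta `π_i`. -/
def tau (N : ℕ) : Matrix (Fin N ⊕ Fin N) (Fin N ⊕ Fin N) ℝ :=
  Matrix.fromBlocks 0 1 (-1) 0

/-- The generator `Δ(x_a x_b)` of the second-order moment algebra, realized as the
symmetric matrix `E_{ab} + E_{ba}`. -/
noncomputable def gen (N : ℕ) (a b : Fin N ⊕ Fin N) :
    Matrix (Fin N ⊕ Fin N) (Fin N ⊕ Fin N) ℝ :=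
  Matrix.single a b 1 + Matrix.single b a 1

/-- The Lie bracket of the moment algebra on symmetric matrices, realizing
`{Δ_{ij}, Δ_{kl}} = τ_{ik}Δ_{jl} + τ_{il}Δ_{jk} + τ_{jk}Δ_{il} + τ_{jl}Δ_{ik}`. -/
noncomputable def momentBracket (N : ℕ) (V W : Matrix (Fin N ⊕ Fin N) (Fin N ⊕ Fin N) ℝ) :
    Matrix (Fin N ⊕ Fin N) (Fin N ⊕ Fin N) ℝ :=
  V * tau N * W - W * tau N * V

theorem mulLeft_sub_mulRight_pow_three_eq_zero {R A : Type*} [CommRing R] [Ring A]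
    [Algebra R A] {X Y : A} (hX : X * X = 0) (hY : Y * Y = 0) :
    (LinearMap.mulLeft R X - LinearMap.mulRight R Y) ^ 3 = 0 := by
  rw [sub_eq_add_neg]
  refine (LinearMap.commute_mulLeft_right (R := R) X Y).neg_right
    |>.add_pow_eq_zero_of_add_le_succ_of_pow_eq_zero (m := 2) (n := 2) ?_ ?_ le_rfl
  · rw [LinearMap.pow_mulLeft, sq, hX, LinearMap.mulLeft_zero_eq_zero]
  · rw [neg_sq, LinearMap.pow_mulRight, sq, hY, LinearMap.mulRight_zero_eq_zero]

theorem momentBracket_eq_mulLeft_sub_mulRight (N : ℕ)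
    (G V : Matrix (Fin N ⊕ Fin N) (Fin N ⊕ Fin N) ℝ) :
    momentBracket N G V =
      (LinearMap.mulLeft ℝ (G * tau N) - LinearMap.mulRight ℝ (tau N * G)) V := by
  simp [momentBracket, Matrix.mul_assoc]

theorem gen_inl_mul_tau_mul_gen_inl (N : ℕ) (i j k l : Fin N) :
    gen N (Sum.inl i) (Sum.inl j) * tau N * gen N (Sum.inl k) (Sum.inl l) = 0 := by
  simp [gen, tau, Matrix.add_mul, Matrix.mul_add]

theorem ad_qq_nilpotent_general (N : ℕ) (i j : Fin N)
    (M : Matrix (Fin N ⊕ Fin N) (Fin N ⊕ Fin N) ℝ) :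
    momentBracket N (gen N (Sum.inl i) (Sum.inl j))
      (momentBracket N (gen N (Sum.inl i) (Sum.inl j))
        (momentBracket N (gen N (Sum.inl i) (Sum.inl j)) M)) = 0 := by
  set G := gen N (Sum.inl i) (Sum.inl j)
  have hGG : G * tau N * G = 0 := gen_inl_mul_tau_mul_gen_inl N i j i j
  have hX : G * tau N * (G * tau N) = 0 := by
    rw [← Matrix.mul_assoc, hGG, Matrix.zero_mul]
  have hY : tau N * G * (tau N * G) = 0 := by
    rw [Matrix.mul_assoc, ← Matrix.mul_assoc G, hGG, Matrix.mul_zero]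
  simp only [momentBracket_eq_mulLeft_sub_mulRight]
  rw [← Module.End.mul_apply, ← Module.End.mul_apply, ← pow_three',
    mulLeft_sub_mulRight_pow_three_eq_zero hX hY, LinearMap.zero_apply]

/-- The adjoint action of any `Δ(q_i q_j)` on the moment algebra is nilpotent:
`ad(Δ(q_i q_j))³ = 0`. -/
theorem ad_qq_nilpotent (N : ℕ) (i j : Fin N)
    (M : Matrix (Fin N ⊕ Fin N) (Fin N ⊕ Fin N) ℝ) (hM : M.IsSymm) :
    momentBracket N (gen N (Sum.inl i) (Sum.inl j))
      (momentBracket N (gen N (Sum.inl i) (Sum.inl j))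
        (momentBracket N (gen N (Sum.inl i) (Sum.inl j)) M)) = 0 :=
  ad_qq_nilpotent_general N i j M
end
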